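/- The maximum value of the expression (H(Y) + β·H(X|Y))/log m over all probability vectors p on D is achieved by the probability vector p_{i,j} = t_j^{β−1} / Σ_k t_k^β (for (i,j) ∈ D), and equals (1/log m)·log(Σ_j t_j^β). -/

import Mathlib

/-!
The numerator is `(1 - β) H(Y) + β H(X)`. With `L = E[log t_Y]` and
`S = ∑_j t_j^β = ∑_{d ∈ D} t_{d.2}^(β-1)`, Gibbs' inequality against the column weights `t_j^β`
gives `H(Y) ≤ log S - β L`, and against the cell weights `t_{d.2}^(β-1)` gives
`H(X) ≤ log S - (β - 1) L`; in the convex combination the terms in `L` cancel. Both bounds are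
equalities at `p*`, which is proportional to the cell weights and whose row law `t_j^β / S` is
proportional to the column weights.
-/

open Finset Real

section Gibbs

variable {ι : Type*}

noncomputable def entropy (s : Finset ι) (p : ι → ℝ) : ℝ :=
  -∑ i ∈ s, p i * log (p i)

variable {s : Finset ι} {p w : ι → ℝ}

/-- Gibbs' inequality, normalised so that the weights `w` need not sum to `1`. -/
theorem entropy_le (hp : ∀ i ∈ s, 0 ≤ p i) (hw : ∀ i ∈ s, 0 ≤ w i)
    (hpw : ∀ i ∈ s, p i ≠ 0 → w i ≠ 0) (hp1 : ∑ i ∈ s, p i = 1) :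
    entropy s p ≤ log (∑ i ∈ s, w i) - ∑ i ∈ s, p i * log (w i) := by
  set W := ∑ i ∈ s, w i
  have hW : 0 < W := by
    obtain ⟨i, hi, hpi⟩ := exists_ne_zero_of_sum_ne_zero (hp1 ▸ one_ne_zero)
    exact ((hw i hi).lt_of_ne (hpw i hi hpi).symm).trans_le (single_le_sum hw hi)
  have hterm : ∀ i ∈ s, p i * log (w i) - p i * log (p i) - p i * log W ≤ w i / W - p i := by
    intro i hi
    rcases (hp i hi).eq_or_lt with hpi | hpi
    · rw [← hpi]
      simpa using div_nonneg (hw i hi) hW.le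
    have hwi : 0 < w i := (hw i hi).lt_of_ne (hpw i hi hpi.ne').symm
    calc p i * log (w i) - p i * log (p i) - p i * log W
        = p i * log (w i / (p i * W)) := by
          rw [log_div hwi.ne' (by positivity), log_mul hpi.ne' hW.ne']
          ring
      _ ≤ p i * (w i / (p i * W) - 1) := by
          gcongr
          exact log_le_sub_one_of_pos (by positivity)
      _ = w i / W - p i := by field_simp
  have hsum := sum_le_sum hterm
  rw [sum_sub_distrib, sum_sub_distrib, sum_sub_distrib, ← sum_mul, ← sum_div, hp1,
    div_self hW.ne'] at hsum
  rw [entropy]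
  linarith

theorem entropy_eq_of_eq_div_sum (hW : ∑ i ∈ s, w i ≠ 0)
    (hp : ∀ i ∈ s, p i = w i / ∑ j ∈ s, w j) :
    entropy s p = log (∑ i ∈ s, w i) - ∑ i ∈ s, p i * log (w i) := by
  have hterm : ∀ i ∈ s,
      p i * log (p i) = p i * log (w i) - log (∑ j ∈ s, w j) * p i := by
    intro i hi
    rw [hp i hi]
    rcases eq_or_ne (w i) 0 with hwi | hwi
    · simp [hwi]
    · rw [log_div hwi hW]
      ring
  rw [entropy, sum_congr rfl hterm, sum_sub_distrib, ← mul_sum, sum_congr rfl hp, ← sum_div,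
    div_self hW]
  ring

end Gibbs

section Marginal

variable {ι κ : Type*} [DecidableEq κ]

def marginal (s : Finset ι) (f : ι → κ) (p : ι → ℝ) (j : κ) : ℝ :=
  ∑ i ∈ s with f i = j, p i

def fiberCard (s : Finset ι) (f : ι → κ) (j : κ) : ℕ :=
  #{i ∈ s | f i = j}

variable {s : Finset ι} {f : ι → κ} {p : ι → ℝ} {β : ℝ}

theorem marginal_nonneg (hp : ∀ i ∈ s, 0 ≤ p i) (j : κ) : 0 ≤ marginal s f p j :=
  sum_nonneg fun i hi => hp i (mem_filter.1 hi).1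

theorem fiberCard_pos_of_marginal_ne_zero {j : κ} (h : marginal s f p j ≠ 0) :
    0 < fiberCard s f j :=
  card_pos.2 (nonempty_of_sum_ne_zero h)

theorem fiberCard_apply_pos {i : ι} (hi : i ∈ s) : 0 < fiberCard s f (f i) :=
  card_pos.2 ⟨i, mem_filter.2 ⟨hi, rfl⟩⟩

theorem natCast_mul_rpow_sub_one (k : ℕ) (hβ : β ≠ 0) :
    (k : ℝ) * (k : ℝ) ^ (β - 1) = k ^ β := by
  rw [← rpow_one_add' k.cast_nonneg (by simpa using hβ)]
  ring_nf

theorem marginal_eq_rpow_div (hβ : β ≠ 0) {S : ℝ}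
    (hp : ∀ i ∈ s, p i = (fiberCard s f (f i) : ℝ) ^ (β - 1) / S) (j : κ) :
    marginal s f p j = (fiberCard s f j : ℝ) ^ β / S := by
  rw [marginal, sum_congr rfl fun i hi => (mem_filter.1 hi).2 ▸ hp i (mem_filter.1 hi).1,
    sum_const, nsmul_eq_mul, ← natCast_mul_rpow_sub_one _ hβ, mul_div_assoc]
  rfl

theorem sum_mul_log_fiberCard_rpow (γ : ℝ) :
    ∑ i ∈ s, p i * log ((fiberCard s f (f i) : ℝ) ^ γ)
      = γ * ∑ i ∈ s, p i * log (fiberCard s f (f i)) := by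
  rw [mul_sum]
  refine sum_congr rfl fun i hi => ?_
  rw [log_rpow (by exact_mod_cast fiberCard_apply_pos hi)]
  ring

variable [Fintype κ]

theorem sum_marginal : ∑ j, marginal s f p j = ∑ i ∈ s, p i :=
  sum_fiberwise s f p

theorem sum_marginal_mul (g : κ → ℝ) :
    ∑ j, marginal s f p j * g j = ∑ i ∈ s, p i * g (f i) := by
  rw [← sum_fiberwise s f fun i => p i * g (f i)]
  refine sum_congr rfl fun j _ => ?_
  rw [marginal, sum_mul]
  exact sum_congr rfl fun i hi => by rw [(mem_filter.1 hi).2]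

theorem sum_marginal_mul_log_fiberCard_rpow (γ : ℝ) :
    ∑ j, marginal s f p j * log ((fiberCard s f j : ℝ) ^ γ)
      = γ * ∑ i ∈ s, p i * log (fiberCard s f (f i)) := by
  rw [sum_marginal_mul fun j => log ((fiberCard s f j : ℝ) ^ γ), sum_mul_log_fiberCard_rpow]

theorem sum_fiberCard_rpow_sub_one (hβ : β ≠ 0) :
    ∑ i ∈ s, (fiberCard s f (f i) : ℝ) ^ (β - 1) = ∑ j, (fiberCard s f j : ℝ) ^ β := by
  rw [← sum_fiberwise' s f fun j => (fiberCard s f j : ℝ) ^ (β - 1)]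
  refine sum_congr rfl fun j _ => ?_
  rw [sum_const, nsmul_eq_mul]
  exact natCast_mul_rpow_sub_one _ hβ

theorem sum_fiberCard_rpow_pos (hβ : β ≠ 0) (hs : s.Nonempty) :
    0 < ∑ j, (fiberCard s f j : ℝ) ^ β := by
  rw [← sum_fiberCard_rpow_sub_one hβ]
  exact sum_pos (fun i hi => rpow_pos_of_pos (by exact_mod_cast fiberCard_apply_pos hi) _) hs

theorem entropy_marginal_le (hp : ∀ i ∈ s, 0 ≤ p i) (hp1 : ∑ i ∈ s, p i = 1) :
    entropy univ (marginal s f p)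
      ≤ log (∑ j, (fiberCard s f j : ℝ) ^ β) - β * ∑ i ∈ s, p i * log (fiberCard s f (f i)) := by
  rw [← sum_marginal_mul_log_fiberCard_rpow]
  refine entropy_le (fun j _ => marginal_nonneg hp j) (fun j _ => by positivity)
    (fun j _ hj => (rpow_pos_of_pos
      (Nat.cast_pos.2 (fiberCard_pos_of_marginal_ne_zero hj)) _).ne') ?_
  rw [sum_marginal, hp1]

theorem entropy_le_of_fiberCard (hβ : β ≠ 0) (hp : ∀ i ∈ s, 0 ≤ p i)
    (hp1 : ∑ i ∈ s, p i = 1) :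
    entropy s p ≤ log (∑ j, (fiberCard s f j : ℝ) ^ β)
      - (β - 1) * ∑ i ∈ s, p i * log (fiberCard s f (f i)) := by
  rw [← sum_fiberCard_rpow_sub_one hβ, ← sum_mul_log_fiberCard_rpow]
  exact entropy_le hp (fun i _ => by positivity)
    (fun i hi _ => (rpow_pos_of_pos (Nat.cast_pos.2 (fiberCard_apply_pos hi)) _).ne') hp1

theorem entropy_marginal_eq (hβ : β ≠ 0) (hs : s.Nonempty)
    (hp : ∀ i ∈ s, p i = (fiberCard s f (f i) : ℝ) ^ (β - 1) / ∑ j, (fiberCard s f j : ℝ) ^ β) :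
    entropy univ (marginal s f p)
      = log (∑ j, (fiberCard s f j : ℝ) ^ β) - β * ∑ i ∈ s, p i * log (fiberCard s f (f i)) := by
  rw [← sum_marginal_mul_log_fiberCard_rpow]
  exact entropy_eq_of_eq_div_sum (sum_fiberCard_rpow_pos hβ hs).ne'
    fun j _ => marginal_eq_rpow_div hβ hp j

theorem entropy_eq_of_fiberCard (hβ : β ≠ 0) (hs : s.Nonempty)
    (hp : ∀ i ∈ s, p i = (fiberCard s f (f i) : ℝ) ^ (β - 1) / ∑ j, (fiberCard s f j : ℝ) ^ β) :
    entropy s p = log (∑ j, (fiberCard s f j : ℝ) ^ β)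
      - (β - 1) * ∑ i ∈ s, p i * log (fiberCard s f (f i)) := by
  rw [← sum_fiberCard_rpow_sub_one hβ, ← sum_mul_log_fiberCard_rpow]
  refine entropy_eq_of_eq_div_sum ?_ fun i hi => ?_ <;> rw [sum_fiberCard_rpow_sub_one hβ]
  exacts [(sum_fiberCard_rpow_pos hβ hs).ne', hp i hi]

theorem entropy_marginal_add_mul_sub_le (hβ0 : 0 < β) (hβ1 : β ≤ 1)
    (hp : ∀ i ∈ s, 0 ≤ p i) (hp1 : ∑ i ∈ s, p i = 1) :
    entropy univ (marginal s f p) + β * (entropy s p - entropy univ (marginal s f p))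
      ≤ log (∑ j, (fiberCard s f j : ℝ) ^ β) := by
  have hY := entropy_marginal_le (f := f) (β := β) hp hp1
  have hX := entropy_le_of_fiberCard (f := f) hβ0.ne' hp hp1
  linarith [mul_le_mul_of_nonneg_left hY (sub_nonneg.2 hβ1), mul_le_mul_of_nonneg_left hX hβ0.le]

theorem entropy_marginal_add_mul_sub_eq (hβ : β ≠ 0) (hs : s.Nonempty)
    (hp : ∀ i ∈ s, p i = (fiberCard s f (f i) : ℝ) ^ (β - 1) / ∑ j, (fiberCard s f j : ℝ) ^ β) :
    entropy univ (marginal s f p) + β * (entropy s p - entropy univ (marginal s f p))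
      = log (∑ j, (fiberCard s f j : ℝ) ^ β) := by
  rw [entropy_marginal_eq hβ hs hp, entropy_eq_of_fiberCard hβ hs hp]
  ring

end Marginal

theorem stmt6_general (n m : ℕ) (D : Finset (Fin n × Fin m)) (hD : D.Nonempty)
    (β : ℝ) (hβ : β ∈ Set.Ioo (0 : ℝ) 1)
    (t : Fin m → ℕ) (ht : ∀ j, t j = (D.filter (fun d => d.2 = j)).card)
    (S : ℝ) (hS : S = ∑ j ∈ univ.filter (fun j => 1 ≤ t j), (t j : ℝ) ^ β)
    (pstar : Fin n × Fin m → ℝ)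
    (hpstar : ∀ d, pstar d = if d ∈ D then (t d.2 : ℝ) ^ (β - 1) / S else 0)
    (F : (Fin n × Fin m → ℝ) → ℝ)
    (hF : ∀ p, F p =
      ((-∑ j, (∑ d ∈ D.filter (fun d => d.2 = j), p d)
            * Real.log (∑ d ∈ D.filter (fun d => d.2 = j), p d))
        + β * ((-∑ d ∈ D, p d * Real.log (p d))
            - (-∑ j, (∑ d ∈ D.filter (fun d => d.2 = j), p d)
                * Real.log (∑ d ∈ D.filter (fun d => d.2 = j), p d))))
      / Real.log m) :
    F pstar = (1 / Real.log m) * Real.log S ∧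
    ∀ p : Fin n × Fin m → ℝ,
      (∀ d, 0 ≤ p d) → (∀ d, d ∉ D → p d = 0) → (∑ d ∈ D, p d = 1) →
      F p ≤ (1 / Real.log m) * Real.log S := by
  obtain ⟨hβ0, hβ1⟩ := hβ
  obtain rfl : t = fiberCard D Prod.snd := funext ht
  have hS_univ : S = ∑ j, (fiberCard D Prod.snd j : ℝ) ^ β := by
    rw [hS]
    refine sum_filter_of_ne fun j _ hj => Nat.one_le_iff_ne_zero.2 fun h0 => hj ?_
    simp [h0, zero_rpow hβ0.ne']
  subst hS_univ
  refine ⟨?_, fun p hp0 _ hp1 => ?_⟩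
  · rw [hF, one_div_mul_eq_div]
    congr 1
    exact entropy_marginal_add_mul_sub_eq hβ0.ne' hD fun d hd => by rw [hpstar, if_pos hd]
  · rw [hF, one_div_mul_eq_div]
    exact div_le_div_of_nonneg_right
      (entropy_marginal_add_mul_sub_le hβ0 hβ1.le (fun d _ => hp0 d) hp1) (log_natCast_nonneg m)

/-- The maximum of `(H(Y) + β·H(X|Y))/log m` (with `Y` the row coordinate of
the `D`-valued random variable `X` with law `p`, and `H(X|Y) = H(X) − H(Y)`) over all
probability vectors `p` on `D` is achieved by `p_{i,j} = t_j^{β−1} / ∑_k t_k^β` and equals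
`(1/log m)·log (∑_{j : t_j ≥ 1} t_j^β)`. -/
theorem stmt6 (n m : ℕ) (hm : 2 ≤ m) (D : Finset (Fin n × Fin m)) (hD : D.Nonempty)
    (β : ℝ) (hβ : β ∈ Set.Ioo (0 : ℝ) 1)
    (t : Fin m → ℕ) (ht : ∀ j, t j = (D.filter (fun d => d.2 = j)).card)
    (S : ℝ) (hS : S = ∑ j ∈ univ.filter (fun j => 1 ≤ t j), (t j : ℝ) ^ β)
    (pstar : Fin n × Fin m → ℝ)
    (hpstar : ∀ d, pstar d = if d ∈ D then (t d.2 : ℝ) ^ (β - 1) / S else 0)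
    (F : (Fin n × Fin m → ℝ) → ℝ)
    (hF : ∀ p, F p =
      ((-∑ j, (∑ d ∈ D.filter (fun d => d.2 = j), p d)
            * Real.log (∑ d ∈ D.filter (fun d => d.2 = j), p d))
        + β * ((-∑ d ∈ D, p d * Real.log (p d))
            - (-∑ j, (∑ d ∈ D.filter (fun d => d.2 = j), p d)
                * Real.log (∑ d ∈ D.filter (fun d => d.2 = j), p d))))
      / Real.log m) :
    F pstar = (1 / Real.log m) * Real.log S ∧
    ∀ p : Fin n × Fin m → ℝ,
      (∀ d, 0 ≤ p d) → (∀ d, d ∉ D → p d = 0) → (∑ d ∈ D, p d = 1) →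
      F p ≤ (1 / Real.log m) * Real.log S :=
  stmt6_general n m D hD β hβ t ht S hS pstar hpstar F hF
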